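/- arXiv:1408.5599 — 6 statements merged into one kernel-verified Lean document; each statement's English description precedes it below -/
import Mathlib

section
/- For any point x in a compact metric space, the complement of the smallest closed forward-invariant set containing x equals the largest open set not accessible from x. -/
/-!
A closed forward-invariant set containing `x` carries all the mass of every `P x t`, so its
complement is an open set not accessible from `x`. Conversely, if an open set `U` is not
accessible from `x`, consider the set `K` of points from which `U` is not accessible. Since the
transition probabilities depend narrowly continuously on the starting point, the portmanteau
theorem makes `y ↦ P y t U` lower semicontinuous, so `K` is closed; it contains `x`, misses `U`,
and is forward invariant by Chapman–Kolmogorov.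
-/

open MeasureTheory Filter Topology

lemma lowerSemicontinuous_measure_of_isOpen {Y X : Type*} [TopologicalSpace Y]
    [TopologicalSpace X] [MeasurableSpace X] [OpensMeasurableSpace X] [HasOuterApproxClosed X]
    {μ : Y → ProbabilityMeasure X} (hμ : Continuous μ) {U : Set X} (hU : IsOpen U) :
    LowerSemicontinuous fun y => (μ y : Measure X) U :=
  lowerSemicontinuous_iff_le_liminf.2 fun y =>
    ProbabilityMeasure.le_liminf_measure_open_of_tendsto (hμ.tendsto y) hU

lemma isClosed_setOf_forall_eq_zero {ι Y : Type*} [TopologicalSpace Y] {f : ι → Y → ENNReal}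
    (hf : ∀ i, LowerSemicontinuous (f i)) : IsClosed {y | ∀ i, f i y = 0} := by
  simp_rw [← nonpos_iff_eq_zero, Set.ofPred_forall]
  exact isClosed_iInter fun i => (hf i).isClosed_preimage 0

/-- `0 = P y (t + s) U = ∫⁻ w, P w s U ∂(P y t)` forces `P w s U = 0` for `P y t`-a.e. `w`. -/
lemma measure_compl_setOf_forall_measure_eq_zero {X : Type*} [MeasurableSpace X]
    {P : X → ℕ → Measure X} {U : Set X}
    (hCK : ∀ y s t, P y (s + t) U = ∫⁻ w, P w t U ∂(P y s))
    (hmeas : ∀ t, Measurable fun y => P y t U) {y : X} (hy : ∀ t, P y t U = 0) (t : ℕ) :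
    P y t {w | ∀ s, P w s U = 0}ᶜ = 0 := by
  have hnull : ∀ s, P y t {w | P w s U ≠ 0} = 0 := fun s => by
    have := (lintegral_eq_zero_iff (hmeas s)).1 ((hCK y t s).symm.trans (hy (t + s)))
    simpa [Filter.EventuallyEq, ae_iff] using this
  have hcompl : {w | ∀ s, P w s U = 0}ᶜ = ⋃ s, {w | P w s U ≠ 0} := by ext; simp
  rw [hcompl]
  exact measure_iUnion_null hnull

/-- For any point `x` in a compact metric space with a Markovian family of transition
probabilities, the complement of the smallest closed forward-invariant set containing `x`
equals the largest open set not accessible from `x` (i.e. the union of all open sets not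
accessible from `x`). -/
theorem stmt1 {X : Type*} [MetricSpace X] [CompactSpace X]
    [MeasurableSpace X] [BorelSpace X]
    (P : X → ℕ → Measure X) (hprob : ∀ x t, IsProbabilityMeasure (P x t))
    (hcont : ∀ t (f : X → ℝ), Continuous f →
      Continuous fun x => ∫ y, f y ∂(P x t))
    (hP0 : ∀ x (A : Set X), MeasurableSet A → P x 0 A = Set.indicator A 1 x)
    (hCK : ∀ x s t (A : Set X), MeasurableSet A →
      P x (s + t) A = ∫⁻ y, P y t A ∂(P x s))
    (x : X) :
    (⋂₀ {K : Set X | IsClosed K ∧ x ∈ K ∧ ∀ y ∈ K, ∀ t, P y t K = 1})ᶜ =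
      ⋃₀ {U : Set X | IsOpen U ∧ ¬ ∃ t, 0 < P x t U} := by
  ext z
  simp only [Set.mem_compl_iff, Set.mem_sInter, Set.mem_sUnion, Set.mem_ofPred_eq, not_forall,
    not_exists, not_lt, nonpos_iff_eq_zero]
  constructor
  · rintro ⟨K, ⟨hKc, hxK, hKinv⟩, hzK⟩
    exact ⟨Kᶜ, ⟨hKc.isOpen_compl,
      fun t => (prob_compl_eq_zero_iff hKc.measurableSet).2 (hKinv x hxK t)⟩, hzK⟩
  · rintro ⟨U, ⟨hUo, hxU⟩, hzU⟩
    have hlsc : ∀ t, LowerSemicontinuous fun y => P y t U := fun t =>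
      lowerSemicontinuous_measure_of_isOpen (μ := fun y => ⟨P y t, hprob y t⟩)
        (ProbabilityMeasure.continuous_iff_forall_continuousMap_continuous_integral.2
          fun f => hcont t f f.continuous) hUo
    have hKc : IsClosed {y | ∀ t, P y t U = 0} := isClosed_setOf_forall_eq_zero hlsc
    refine ⟨_, ⟨hKc, hxU, fun y hy t => ?_⟩, fun hz => ?_⟩
    · exact (prob_compl_eq_zero_iff hKc.measurableSet).1
        (measure_compl_setOf_forall_measure_eq_zero (fun y s t => hCK y s t U hUo.measurableSet)
          (fun t => (hlsc t).measurable) hy t)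
    · simpa [hP0 z U hUo.measurableSet, hzU] using hz 0
end

section
/- For any x, y in X, the image of the smallest closed forward-invariant set (under the two-point motion) containing (x,y) under the first coordinate projection is exactly the smallest closed forward-invariant set containing x. -/
open MeasureTheory ProbabilityTheory Filter Topology

/-- A (discrete-time) filtered random dynamical system over a memoryless stationary
noise space, on a metric space `X`. -/
structure MRDS (Ω X : Type*) [mΩ : MeasurableSpace Ω] [MetricSpace X]
    [mX : MeasurableSpace X] [BorelSpace X] where
  P : Measure Ω
  hprob : IsProbabilityMeasure P
  F : ℕ → MeasurableSpace Ω
  hle : ∀ t, F t ≤ mΩ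
  hmono : Monotone F
  θ : ℕ → Ω → Ω
  hθ0 : θ 0 = id
  hθadd : ∀ s t, θ (s + t) = θ s ∘ θ t
  hθmeas : ∀ s t, @Measurable Ω Ω (F (s + t)) (F s) (θ t)
  hθpres : ∀ t, MeasurePreserving (θ t) P P
  memless : ∀ s, Indep (F s) ((⨆ t, F t).comap (θ s)) P
  φ : ℕ → Ω → X → X
  hφcont : ∀ t ω, Continuous (φ t ω)
  hφmeas : ∀ t, @Measurable (Ω × X) X ((F t).prod mX) mX (fun p => φ t p.1 p.2)
  hφ0 : ∀ ω, φ 0 ω = id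
  hφcocycle : ∀ s t ω, φ (s + t) ω = φ t (θ s ω) ∘ φ s ω

namespace MRDS

variable {Ω X : Type*} [MeasurableSpace Ω] [MetricSpace X]
  [MeasurableSpace X] [BorelSpace X]

/-- The one-point transition probabilities `φ_x^t`. -/
noncomputable def law (R : MRDS Ω X) (x : X) (t : ℕ) : Measure X :=
  R.P.map (fun ω => R.φ t ω x)

/-- A closed set that is forward-invariant for the one-point transition probabilities. -/
def FwdInv (R : MRDS Ω X) (K : Set X) : Prop :=
  IsClosed K ∧ ∀ x ∈ K, ∀ t, R.law x t K = 1

/-- A minimal set: non-empty, closed, forward-invariant, with no proper non-empty closed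
forward-invariant subsets. -/
def Minimal (R : MRDS Ω X) (K : Set X) : Prop :=
  K.Nonempty ∧ R.FwdInv K ∧ ∀ K' ⊆ K, R.FwdInv K' → K' = K ∨ K' = ∅

/-- `A` contracts under the noise realisation `ω`. -/
def contracts (R : MRDS Ω X) (ω : Ω) (A : Set X) : Prop :=
  Tendsto (fun t => EMetric.diam (R.φ t ω '' A)) atTop (𝓝 0)

/-- `(ω, x)` is an asymptotically stable pair. -/
def stablePair (R : MRDS Ω X) (ω : Ω) (x : X) : Prop :=
  ∃ U ∈ 𝓝 x, R.contracts ω U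

/-- The set of asymptotically stable pairs. -/
def O (R : MRDS Ω X) : Set (Ω × X) := {p | R.stablePair p.1 p.2}

/-- The set of noise realisations under which `U` contracts. -/
def EU (R : MRDS Ω X) (U : Set X) : Set Ω := {ω | R.contracts ω U}

/-- `x` is potentially stable. -/
def potStable (R : MRDS Ω X) (x : X) : Prop := 0 < R.P {ω | R.stablePair ω x}

/-- `x` is almost surely stable. -/
def asStable (R : MRDS Ω X) (x : X) : Prop := R.P {ω | R.stablePair ω x} = 1

/-- `φ` is globally synchronising. -/
def synchronising (R : MRDS Ω X) : Prop :=
  ∀ x y : X,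
    R.P {ω | Tendsto (fun t => dist (R.φ t ω x) (R.φ t ω y)) atTop (𝓝 0)} = 1

/-- `φ` is stably synchronising. -/
def stablySynchronising (R : MRDS Ω X) : Prop :=
  R.synchronising ∧ ∀ x : X, R.asStable x

/-- `ρ` is a stationary measure for the one-point transition probabilities. -/
def stationary (R : MRDS Ω X) (ρ : Measure X) : Prop :=
  ∀ t, ∀ A : Set X, MeasurableSet A → ∫⁻ x, R.law x t A ∂ρ = ρ A

end MRDS

/-!
If `K` is closed and almost surely invariant under `φ`, then so is `K ×ˢ univ` under the two-point
motion, so the projected hull lies in `G_x`. Conversely, the hull `G_{(x,y)}` is itself almost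
surely invariant: in a second-countable space it is the intersection of countably many of the
defining sets, and the invariance event of a closed set is measurable because it only has to be
tested on a countable dense subset. Its projection is then almost surely invariant, contains `x`,
and is closed since `X` is compact.
-/

section RandomMaps

open Set

variable {ι Ω Y Z : Type*}

def invariantEvent (f : ι → Ω → Y → Y) (C : Set Y) : Set Ω := {ω | ∀ t, f t ω '' C ⊆ C}

lemma biInter_invariantEvent_subset (f : ι → Ω → Y → Y) (S : Set (Set Y)) :
    ⋂ C ∈ S, invariantEvent f C ⊆ invariantEvent f (⋂₀ S) := by
  intro ω hω t
  simp only [mem_iInter, invariantEvent, mem_ofPred_eq, ← mapsTo_iff_image_subset] at hω ⊢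
  exact mapsTo_sInter.2 fun C hC => (hω C hC t).mono_left (sInter_subset_of_mem hC)

lemma invariantEvent_subset_prod_univ (f : ι → Ω → Y → Y) (g : ι → Ω → Z → Z) (K : Set Y) :
    invariantEvent f K ⊆ invariantEvent (fun t ω => Prod.map (f t ω) (g t ω)) (K ×ˢ univ) := by
  rintro ω hω t _ ⟨p, hp, rfl⟩
  exact ⟨hω t (mem_image_of_mem _ hp.1), trivial⟩

lemma invariantEvent_prod_subset_fst_image (f : ι → Ω → Y → Y) (g : ι → Ω → Z → Z)
    (G : Set (Y × Z)) :
    invariantEvent (fun t ω => Prod.map (f t ω) (g t ω)) G ⊆ invariantEvent f (Prod.fst '' G) := by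
  rintro ω hω t _ ⟨_, ⟨p, hp, rfl⟩, rfl⟩
  exact ⟨_, hω t (mem_image_of_mem _ hp), rfl⟩

variable [TopologicalSpace Y]

lemma exists_countable_subset_sInter_eq [SecondCountableTopology Y] {S : Set (Set Y)}
    (hS : ∀ C ∈ S, IsClosed C) : ∃ T ⊆ S, T.Countable ∧ ⋂₀ T = ⋂₀ S := by
  obtain ⟨T, hTS, hT, hTU⟩ :=
    TopologicalSpace.isOpen_biUnion_countable S compl fun C hC => (hS C hC).isOpen_compl
  refine ⟨T, hTS, hT, ?_⟩
  rwa [← compl_inj_iff, sInter_eq_biInter, sInter_eq_biInter, compl_iInter₂, compl_iInter₂]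

variable [MeasurableSpace Ω]

def invariantHull (μ : Measure Ω) (f : ι → Ω → Y → Y) (y : Y) : Set Y :=
  ⋂₀ {C | IsClosed C ∧ y ∈ C ∧ μ (invariantEvent f C) = 1}

variable [Countable ι] [TopologicalSpace.PseudoMetrizableSpace Y] [MeasurableSpace Y]
  [OpensMeasurableSpace Y]

lemma measurableSet_invariantEvent {f : ι → Ω → Y → Y} (hcont : ∀ t ω, Continuous (f t ω))
    (hmeas : ∀ t y, Measurable fun ω => f t ω y) {C : Set Y} (hC : IsClosed C)
    (hCsep : TopologicalSpace.IsSeparable C) : MeasurableSet (invariantEvent f C) := by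
  obtain ⟨D, hDC, hDcount, hCD⟩ := hCsep.exists_countable_dense_subset
  have hD : invariantEvent f C = ⋂ t, ⋂ y ∈ D, (fun ω => f t ω y) ⁻¹' C := by
    ext ω
    simp only [invariantEvent, mem_ofPred_eq, mem_iInter, mem_preimage,
      ← mapsTo_iff_image_subset]
    refine ⟨fun h t y hy => h t (hDC hy), fun h t => ?_⟩
    have hDmaps : MapsTo (f t ω) D C := fun y hy => h t y hy
    exact (hDmaps.closure_left (hcont t ω) hC).mono_left hCD
  rw [hD]
  exact .iInter fun t => .biInter hDcount fun y _ => hmeas t y hC.measurableSet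

variable [SecondCountableTopology Y]

lemma measure_invariantEvent_sInter_eq_one {μ : Measure Ω} [IsProbabilityMeasure μ]
    {f : ι → Ω → Y → Y} (hcont : ∀ t ω, Continuous (f t ω))
    (hmeas : ∀ t y, Measurable fun ω => f t ω y) {S : Set (Set Y)}
    (hS : ∀ C ∈ S, IsClosed C ∧ μ (invariantEvent f C) = 1) :
    μ (invariantEvent f (⋂₀ S)) = 1 := by
  have hE {C : Set Y} (hC : IsClosed C) : MeasurableSet (invariantEvent f C) :=
    measurableSet_invariantEvent hcont hmeas hC (.of_separableSpace _)
  obtain ⟨T, hTS, hT, hTS_eq⟩ := exists_countable_subset_sInter_eq fun C hC => (hS C hC).1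
  rw [← mem_ae_iff_prob_eq_one (hE (isClosed_sInter fun C hC => (hS C hC).1)), ← hTS_eq]
  refine Filter.mem_of_superset ?_ (biInter_invariantEvent_subset f T)
  exact (countable_bInter_mem hT).2 fun C hC =>
    (mem_ae_iff_prob_eq_one (hE (hS C (hTS hC)).1)).2 (hS C (hTS hC)).2

variable [TopologicalSpace Z] [TopologicalSpace.PseudoMetrizableSpace Z]
  [SecondCountableTopology Z] [MeasurableSpace Z] [OpensMeasurableSpace Z]

theorem fst_image_invariantHull_prodMap [CompactSpace Z] {μ : Measure Ω} [IsProbabilityMeasure μ]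
    {f : ι → Ω → Y → Y} {g : ι → Ω → Z → Z}
    (hfc : ∀ t ω, Continuous (f t ω)) (hfm : ∀ t y, Measurable fun ω => f t ω y)
    (hgc : ∀ t ω, Continuous (g t ω)) (hgm : ∀ t z, Measurable fun ω => g t ω z) (y : Y) (z : Z) :
    Prod.fst '' invariantHull μ (fun t ω => Prod.map (f t ω) (g t ω)) (y, z) =
      invariantHull μ f y := by
  have measure_eq_one_of_subset {A B : Set Ω} (hAB : A ⊆ B) (hA : μ A = 1) : μ B = 1 :=
    le_antisymm prob_le_one (hA ▸ measure_mono hAB)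
  apply Subset.antisymm
  · rintro _ ⟨q, hq, rfl⟩ K ⟨hK, hyK, hKinv⟩
    exact (hq (K ×ˢ univ) ⟨hK.prod isClosed_univ, ⟨hyK, trivial⟩,
      measure_eq_one_of_subset (invariantEvent_subset_prod_univ f g K) hKinv⟩).1
  · have hclosed : IsClosed (invariantHull μ (fun t ω => Prod.map (f t ω) (g t ω)) (y, z)) :=
      isClosed_sInter fun C hC => hC.1
    have hinv : μ (invariantEvent (fun t ω => Prod.map (f t ω) (g t ω))
        (invariantHull μ (fun t ω => Prod.map (f t ω) (g t ω)) (y, z))) = 1 :=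
      measure_invariantEvent_sInter_eq_one (fun t ω => (hfc t ω).prodMap (hgc t ω))
        (fun t p => (hfm t p.1).prodMk (hgm t p.2)) fun C hC => ⟨hC.1, hC.2.2⟩
    exact sInter_subset_of_mem ⟨isClosedMap_fst_of_compactSpace _ hclosed,
      ⟨(y, z), mem_sInter.2 fun C hC => hC.2.1, rfl⟩,
      measure_eq_one_of_subset (invariantEvent_prod_subset_fst_image f g _) hinv⟩

end RandomMaps

/-- The first-coordinate projection of the smallest closed set containing `(x,y)` that is
almost-surely forward-invariant under the two-point motion is the smallest closed set
containing `x` that is almost-surely forward-invariant under `φ`. -/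
theorem stmt2 {Ω X : Type*} [MeasurableSpace Ω] [MetricSpace X] [CompactSpace X]
    [MeasurableSpace X] [BorelSpace X] (R : MRDS Ω X) (x y : X) :
    Prod.fst '' (⋂₀ {C : Set (X × X) | IsClosed C ∧ (x, y) ∈ C ∧
        R.P {ω | ∀ t, (fun p : X × X => (R.φ t ω p.1, R.φ t ω p.2)) '' C ⊆ C} = 1}) =
      ⋂₀ {K : Set X | IsClosed K ∧ x ∈ K ∧
        R.P {ω | ∀ t, R.φ t ω '' K ⊆ K} = 1} := by
  have := R.hprob
  have hmeas (t : ℕ) (z : X) : Measurable fun ω => R.φ t ω z :=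
    (R.hφmeas t).comp ((measurable_id'' (R.hle t)).prodMk measurable_const)
  exact fst_image_invariantHull_prodMap R.hφcont hmeas R.hφcont hmeas x y
end

section
/- Let K be a compact subset of X possessing no non-empty closed forward-invariant subsets. Then for any x ∈ X, almost surely there exists an unbounded sequence of times (t_n) such that φ(t_n,ω)x ∉ K for all n. -/
open MeasureTheory ProbabilityTheory Filter Topology

/-!
Let `C` be the set of points of `K` from which the trajectory lies in `K` almost surely at every
time. Since `y ↦ φ_y^t(K)` is upper semicontinuous, `C` is closed, and by the Chapman–Kolmogorov
equation it is forward invariant; hence `C = ∅`. Upper semicontinuity and compactness of `K` then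
give `T` and `c < 1` such that from every point of `K` the trajectory is in `K` at some time
`t ≤ T` with probability at most `c`. By the Markov property, the probability of staying in `K`
during `[N, N + n T]` is at most `cⁿ`.
-/

open scoped ENNReal

theorem upperSemicontinuous_measure_setOf_mem {Ω Y Z : Type*} [MeasurableSpace Ω]
    [TopologicalSpace Y] [SequentialSpace Y] [TopologicalSpace Z] [MeasurableSpace Z]
    [OpensMeasurableSpace Z] (μ : Measure Ω) [IsFiniteMeasure μ] {g : Ω → Y → Z}
    (hg : ∀ ω, Continuous (g ω)) (hgm : ∀ y, Measurable fun ω => g ω y) {K : Set Z}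
    (hK : IsClosed K) : UpperSemicontinuous fun y => μ {ω | g ω y ∈ K} := by
  refine upperSemicontinuous_iff_isClosed_preimage.2 fun c => ?_
  refine IsSeqClosed.isClosed fun ys y hys hlim => ?_
  set f : ℕ → Ω → ℝ≥0∞ := fun n ω => K.indicator 1 (g ω (ys n))
  have hf : ∀ n, Measurable (f n) := fun n =>
    (measurable_one.indicator hK.measurableSet).comp (hgm (ys n))
  have hlimsup : ∀ ω, limsup (f · ω) atTop ≤ K.indicator 1 (g ω y) := by
    intro ω
    by_cases hy : g ω y ∈ K
    · rw [Set.indicator_of_mem hy]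
      exact limsup_le_of_le (h := .of_forall fun n => Set.indicator_le_self' (by simp) _)
    · have hout : ∀ᶠ n in atTop, g ω (ys n) ∉ K :=
        ((hg ω).tendsto y |>.comp hlim) (hK.isOpen_compl.mem_nhds hy)
      rw [Set.indicator_of_notMem hy, limsup_congr (hout.mono fun n hn =>
        Set.indicator_of_notMem hn _), limsup_const]
  have hμ : ∀ y, μ {ω | g ω y ∈ K} = ∫⁻ ω, K.indicator 1 (g ω y) ∂μ := fun y =>
    (lintegral_indicator_one (hgm y hK.measurableSet)).symm
  calc c ≤ limsup (fun n => μ {ω | g ω (ys n) ∈ K}) atTop :=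
        le_limsup_of_frequently_le' (.of_forall hys)
    _ = limsup (fun n => ∫⁻ ω, f n ω ∂μ) atTop := by simp only [hμ]; rfl
    _ ≤ ∫⁻ ω, limsup (f · ω) atTop ∂μ :=
        limsup_lintegral_le 1 hf (fun n => .of_forall fun ω => Set.indicator_le_self' (by simp) _)
          (by simp)
    _ ≤ μ {ω | g ω y ∈ K} := (lintegral_mono hlimsup).trans_eq (hμ y).symm

theorem IsCompact.exists_uniform_le_of_forall_exists_lt_one {X : Type*} [TopologicalSpace X]
    {K : Set X} (hK : IsCompact K) {f : ℕ → X → ℝ≥0∞} (hf : ∀ t, UpperSemicontinuous (f t))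
    (h : ∀ y ∈ K, ∃ t, f t y < 1) : ∃ T, ∃ c < 1, ∀ y ∈ K, ∃ t ≤ T, f t y ≤ c := by
  let U : {p : ℕ × ℝ≥0∞ // p.2 < 1} → Set X := fun i => {y | f i.1.1 y < i.1.2}
  obtain ⟨s, hs⟩ := hK.elim_finite_subcover U (fun i => (hf i.1.1).isOpen_preimage i.1.2)
    fun y hy => by
      obtain ⟨t, ht⟩ := h y hy
      obtain ⟨c, hc, hc1⟩ := exists_between ht
      exact Set.mem_iUnion.2 ⟨⟨(t, c), hc1⟩, hc⟩
  refine ⟨s.sup (·.1.1), s.sup (·.1.2), (Finset.sup_lt_iff zero_lt_one).2 fun i _ => i.2,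
    fun y hy => ?_⟩
  obtain ⟨i, hi, hyi⟩ := Set.mem_iUnion₂.1 (hs hy)
  exact ⟨i.1.1, Finset.le_sup (f := (·.1.1)) hi,
    (le_of_lt hyi).trans (Finset.le_sup (f := (·.1.2)) hi)⟩

namespace MRDS

variable {Ω X : Type*} [MeasurableSpace Ω] [MetricSpace X] [MeasurableSpace X] [BorelSpace X]
  (R : MRDS Ω X)

instance : IsProbabilityMeasure R.P := R.hprob

-- Copies of `Ω` carrying the σ-algebra of the noise up to time `m`, resp. of the whole noise, so
-- that product measures over these σ-algebras can be formed.
def Past (_ : MRDS Ω X) (_ : ℕ) : Type _ := Ω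

instance (m : ℕ) : MeasurableSpace (R.Past m) := R.F m

def Future (_ : MRDS Ω X) : Type _ := Ω

instance : MeasurableSpace R.Future := ⨆ t, R.F t

lemma measurable_phi_past (t : ℕ) (x : X) : Measurable fun ω : R.Past t => R.φ t ω x :=
  (R.hφmeas t).comp (measurable_id.prodMk measurable_const)

lemma measurable_phi_uncurry (t : ℕ) : Measurable fun p : Ω × X => R.φ t p.1 p.2 :=
  (R.hφmeas t).mono (sup_le_sup (MeasurableSpace.comap_mono (R.hle t)) le_rfl) le_rfl

lemma measurable_phi (t : ℕ) (x : X) : Measurable fun ω : Ω => R.φ t ω x :=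
  (R.measurable_phi_past t x).mono (R.hle t) le_rfl

lemma measurable_phi_future (t : ℕ) : Measurable fun p : R.Future × X => R.φ t p.1 p.2 :=
  (R.hφmeas t).mono (sup_le_sup (MeasurableSpace.comap_mono (le_iSup R.F t)) le_rfl) le_rfl

lemma measurable_theta_future (m : ℕ) : @Measurable Ω R.Future _ _ (R.θ m) := by
  refine measurable_iff_comap_le.2 ?_
  change MeasurableSpace.comap (R.θ m) (⨆ t, R.F t) ≤ _
  rw [MeasurableSpace.comap_iSup]
  exact iSup_le fun t => (measurable_iff_comap_le.1 (R.hθmeas t m)).trans (R.hle (t + m))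

instance (x : X) (t : ℕ) : IsProbabilityMeasure (R.law x t) :=
  Measure.isProbabilityMeasure_map (R.measurable_phi t x).aemeasurable

lemma law_apply (x : X) (t : ℕ) {A : Set X} (hA : MeasurableSet A) :
    R.law x t A = R.P {ω | R.φ t ω x ∈ A} :=
  Measure.map_apply (R.measurable_phi t x) hA

lemma measurable_law_apply (t : ℕ) {A : Set X} (hA : MeasurableSet A) :
    Measurable fun y => R.law y t A := by
  simp_rw [R.law_apply _ t hA]
  exact measurable_measure_prodMk_left ((R.measurable_phi_uncurry t).comp measurable_swap hA)

lemma upperSemicontinuous_law_apply (t : ℕ) {K : Set X} (hK : IsClosed K) :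
    UpperSemicontinuous fun y => R.law y t K := by
  simp_rw [R.law_apply _ t hK.measurableSet]
  exact upperSemicontinuous_measure_setOf_mem R.P (R.hφcont t) (R.measurable_phi t) hK

/-- By memorylessness, `ω ↦ (ω, θ m ω)` carries `P` to the product of the restrictions of `P` to
`F m` and to `⨆ t, F t`. -/
lemma measure_setOf_theta_mem (m : ℕ) {W : Set (Ω × Ω)}
    (hW : MeasurableSet[(R.F m).prod (⨆ t, R.F t)] W) :
    R.P {ω | (ω, R.θ m ω) ∈ W} = ∫⁻ ω₁, R.P {ω₂ | (ω₁, ω₂) ∈ W} ∂ R.P := by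
  let P₁ : Measure (R.Past m) := R.P.trim (R.hle m)
  let P₂ : Measure R.Future := R.P.trim (iSup_le R.hle)
  have : IsFiniteMeasure P₁ := isFiniteMeasure_trim (μ := R.P) _
  have : IsFiniteMeasure P₂ := isFiniteMeasure_trim (μ := R.P) _
  let pair : Ω → R.Past m × R.Future := fun ω => (ω, R.θ m ω)
  have hpair : Measurable pair :=
    (measurable_id.mono (R.hle m) le_rfl).prodMk (R.measurable_theta_future m)
  have hmap : R.P.map pair = P₁.prod P₂ := by
    refine (Measure.prod_eq fun s t hs ht => ?_).symm
    have hP₁ : P₁ s = R.P s := trim_measurableSet_eq _ hs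
    have hP₂ : P₂ t = R.P t := trim_measurableSet_eq _ ht
    rw [Measure.map_apply hpair (hs.prod ht), hP₁, hP₂,
      ← (R.hθpres m).measure_preimage (iSup_le R.hle t ht).nullMeasurableSet]
    exact (Indep_iff _ _ _).1 (R.memless m) s (R.θ m ⁻¹' t) hs ⟨t, ht, rfl⟩
  calc R.P {ω | (ω, R.θ m ω) ∈ W} = P₁.prod P₂ W := by
        rw [← hmap, Measure.map_apply hpair hW]; rfl
    _ = ∫⁻ ω₁, P₂ (Prod.mk ω₁ ⁻¹' W) ∂P₁ := Measure.prod_apply hW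
    _ = ∫⁻ ω₁, P₂ (Prod.mk ω₁ ⁻¹' W) ∂ R.P := lintegral_trim _ (measurable_measure_prodMk_left hW)
    _ = ∫⁻ ω₁, R.P {ω₂ | (ω₁, ω₂) ∈ W} ∂ R.P :=
      lintegral_congr fun ω₁ => trim_measurableSet_eq _ (measurable_prodMk_left hW)

lemma measurable_phi_comp_phi (m t : ℕ) (x : X) :
    Measurable fun q : R.Past m × R.Future => R.φ t q.2 (R.φ m q.1 x) :=
  (R.measurable_phi_future t).comp
    (measurable_snd.prodMk ((R.measurable_phi_past m x).comp measurable_fst))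

lemma law_add (x : X) (m t : ℕ) {A : Set X} (hA : MeasurableSet A) :
    R.law x (m + t) A = ∫⁻ y, R.law y t A ∂ R.law x m := by
  calc R.law x (m + t) A = R.P {ω | R.φ t (R.θ m ω) (R.φ m ω x) ∈ A} := by
        simp only [R.law_apply x _ hA, R.hφcocycle m t, Function.comp_apply]
    _ = ∫⁻ ω₁, R.P {ω₂ | R.φ t ω₂ (R.φ m ω₁ x) ∈ A} ∂ R.P :=
        R.measure_setOf_theta_mem m (R.measurable_phi_comp_phi m t x hA)
    _ = ∫⁻ ω, R.law (R.φ m ω x) t A ∂ R.P := by simp only [R.law_apply _ t hA]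
    _ = ∫⁻ y, R.law y t A ∂ R.law x m :=
        (lintegral_map (R.measurable_law_apply t hA) (R.measurable_phi m x)).symm

lemma exists_law_lt_one {K : Set X} (hK : IsClosed K)
    (hno : ¬ ∃ C ⊆ K, C.Nonempty ∧ R.FwdInv C) : ∀ y ∈ K, ∃ t, R.law y t K < 1 := by
  by_contra! ⟨y, hyK, hy⟩
  set C := K ∩ ⋂ t, {z | 1 ≤ R.law z t K}
  have hC : IsClosed C :=
    hK.inter (isClosed_iInter fun t => (R.upperSemicontinuous_law_apply t hK).isClosed_preimage 1)
  refine hno ⟨C, Set.inter_subset_left, ⟨y, hyK, Set.mem_iInter.2 hy⟩, hC, ?_⟩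
  rintro z ⟨hzK, hz⟩ m
  have hz1 : ∀ t, R.law z t K = 1 := fun t => le_antisymm prob_le_one (Set.mem_iInter.1 hz t)
  have hae_one : ∀ t, ∀ᵐ y ∂ R.law z m, R.law y t K = 1 := fun t =>
    ae_eq_of_ae_le_of_lintegral_le (.of_forall fun y => prob_le_one)
      (by rw [← R.law_add z m t hK.measurableSet]; exact measure_ne_top _ _) aemeasurable_const
      (by rw [← R.law_add z m t hK.measurableSet, hz1, lintegral_one, measure_univ])
  have hae_K : ∀ᵐ y ∂ R.law z m, y ∈ K :=
    (ae_mem_iff_measure_eq hK.measurableSet.nullMeasurableSet).2 (by rw [hz1, measure_univ])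
  have hae_C : ∀ᵐ y ∂ R.law z m, y ∈ C := by
    filter_upwards [hae_K, ae_all_iff.2 hae_one] with y hyK hy
    exact ⟨hyK, Set.mem_iInter.2 fun t => (hy t).ge⟩
  rw [(ae_mem_iff_measure_eq hC.measurableSet.nullMeasurableSet).1 hae_C, measure_univ]

lemma measure_inter_forall_mem_le (x : X) {K : Set X} (hK : MeasurableSet K) {T : ℕ}
    {c : ℝ≥0∞} (hKc : ∀ y ∈ K, ∃ t ≤ T, R.law y t K ≤ c) {m : ℕ} {A : Set Ω}
    (hA : MeasurableSet[R.F m] A) (hAK : ∀ ω ∈ A, R.φ m ω x ∈ K) :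
    R.P (A ∩ {ω | ∀ u ≤ T, R.φ (m + u) ω x ∈ K}) ≤ c * R.P A := by
  have hW : MeasurableSet
      {q : R.Past m × R.Future | q.1 ∈ A ∧ ∀ u ≤ T, R.φ u q.2 (R.φ m q.1 x) ∈ K} :=
    measurableSet_setOfPred.2 <|
      (measurableSet_setOfPred.1 (measurable_fst (α := R.Past m) (β := R.Future) hA)).and <|
      .forall fun u => measurable_const.imp <|
        measurableSet_setOfPred.1 (R.measurable_phi_comp_phi m u x hK)
  have hslice : ∀ ω₁, R.P {ω₂ | ω₁ ∈ A ∧ ∀ u ≤ T, R.φ u ω₂ (R.φ m ω₁ x) ∈ K} ≤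
      A.indicator (fun _ => c) ω₁ := by
    intro ω₁
    by_cases hω₁ : ω₁ ∈ A
    · obtain ⟨t, htT, htc⟩ := hKc _ (hAK ω₁ hω₁)
      rw [Set.indicator_of_mem hω₁]
      calc _ ≤ R.P {ω₂ | R.φ t ω₂ (R.φ m ω₁ x) ∈ K} := measure_mono fun ω₂ h => h.2 t htT
        _ = R.law (R.φ m ω₁ x) t K := (R.law_apply _ t hK).symm
        _ ≤ c := htc
    · simp [hω₁]
  calc R.P (A ∩ {ω | ∀ u ≤ T, R.φ (m + u) ω x ∈ K})
      = R.P {ω | ω ∈ A ∧ ∀ u ≤ T, R.φ u (R.θ m ω) (R.φ m ω x) ∈ K} := by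
        simp only [R.hφcocycle m, Function.comp_apply]; rfl
    _ = ∫⁻ ω₁, R.P {ω₂ | ω₁ ∈ A ∧ ∀ u ≤ T, R.φ u ω₂ (R.φ m ω₁ x) ∈ K} ∂ R.P :=
        R.measure_setOf_theta_mem m hW
    _ ≤ ∫⁻ ω₁, A.indicator (fun _ => c) ω₁ ∂ R.P := lintegral_mono hslice
    _ = c * R.P A := lintegral_indicator_const (R.hle m A hA) c

lemma measure_forall_mem_Icc_le_pow (x : X) {K : Set X} (hK : MeasurableSet K) {T : ℕ}
    {c : ℝ≥0∞} (hKc : ∀ y ∈ K, ∃ t ≤ T, R.law y t K ≤ c) (N n : ℕ) :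
    R.P {ω | ∀ s ∈ Set.Icc N (N + n * T), R.φ s ω x ∈ K} ≤ c ^ n := by
  induction n with
  | zero => exact prob_le_one.trans_eq (pow_zero c).symm
  | succ n ih =>
    set M := N + n * T
    have hM : N + (n + 1) * T = M + T := by rw [add_one_mul, ← add_assoc]
    have hS : MeasurableSet[R.F M] {ω | ∀ s ∈ Set.Icc N M, R.φ s ω x ∈ K} := by
      rw [Set.ofPred_forall]
      refine .iInter fun s => ?_
      by_cases hs : s ∈ Set.Icc N M
      · simp only [hs, true_imp_iff]
        exact (R.measurable_phi_past s x).mono (R.hmono hs.2) le_rfl hK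
      · simpa only [hs, false_imp_iff] using .univ
    calc R.P {ω | ∀ s ∈ Set.Icc N (N + (n + 1) * T), R.φ s ω x ∈ K}
        ≤ R.P ({ω | ∀ s ∈ Set.Icc N M, R.φ s ω x ∈ K} ∩
            {ω | ∀ u ≤ T, R.φ (M + u) ω x ∈ K}) := by
          refine measure_mono fun ω hω => ⟨fun s hs => hω s ⟨hs.1, ?_⟩, fun u hu => hω _ ⟨?_, ?_⟩⟩
          all_goals simp only [Set.mem_Icc, hM] at *; omega
      _ ≤ c * R.P {ω | ∀ s ∈ Set.Icc N M, R.φ s ω x ∈ K} :=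
          R.measure_inter_forall_mem_le x hK hKc hS fun ω hω => hω M ⟨by omega, le_rfl⟩
      _ ≤ c ^ (n + 1) := by rw [pow_succ']; gcongr

lemma ae_exists_ge_notMem {K : Set X} (hK : IsCompact K)
    (hno : ¬ ∃ C ⊆ K, C.Nonempty ∧ R.FwdInv C) (x : X) (N : ℕ) :
    ∀ᵐ ω ∂ R.P, ∃ t ≥ N, R.φ t ω x ∉ K := by
  obtain ⟨T, c, hc, hKc⟩ := hK.exists_uniform_le_of_forall_exists_lt_one
    (fun t => R.upperSemicontinuous_law_apply t hK.isClosed) (R.exists_law_lt_one hK.isClosed hno)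
  refine ae_iff.2 (le_antisymm ?_ zero_le)
  refine ge_of_tendsto' (ENNReal.tendsto_pow_atTop_nhds_zero_of_lt_one hc) fun n => ?_
  refine (measure_mono fun ω hω s hs => ?_).trans
    (R.measure_forall_mem_Icc_le_pow x hK.measurableSet hKc N n)
  push Not at hω
  exact hω s hs.1

end MRDS

theorem stmt3_general {Ω X : Type*} [MeasurableSpace Ω] [MetricSpace X]
    [MeasurableSpace X] [BorelSpace X] (R : MRDS Ω X)
    (K : Set X) (hK : IsCompact K)
    (hno : ¬ ∃ C ⊆ K, C.Nonempty ∧ R.FwdInv C)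
    (x : X) :
    ∀ᵐ ω ∂ R.P, ∀ N : ℕ, ∃ t ≥ N, R.φ t ω x ∉ K :=
  ae_all_iff.2 (R.ae_exists_ge_notMem hK hno x)

/-- If a compact set `K` possesses no non-empty closed forward-invariant subsets, then for
any `x`, almost surely there is an unbounded sequence of times at which the trajectory of
`x` lies outside `K`. -/
theorem stmt3 {Ω X : Type*} [MeasurableSpace Ω] [MetricSpace X] [CompactSpace X]
    [MeasurableSpace X] [BorelSpace X] (R : MRDS Ω X)
    (K : Set X) (hK : IsCompact K)
    (hno : ¬ ∃ C ⊆ K, C.Nonempty ∧ R.FwdInv C)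
    (x : X) :
    ∀ᵐ ω ∂ R.P, ∀ N : ℕ, ∃ t ≥ N, R.φ t ω x ∉ K :=
  stmt3_general R K hK hno x
end

section
/- For any open set U ⊂ X, the set E_U of noise realisations ω under which diam(φ(t,ω)U) → 0 as t → ∞ is measurable with respect to F_∞; moreover the set O of asymptotically stable pairs (ω,x) is product-measurable and backward-invariant under the skew-product Θ^t(ω,x) = (θ^t ω, φ(t,ω)x). -/
open MeasureTheory ProbabilityTheory Filter Topology

/-! Contraction of an open set is a countable condition: by continuity, the diameter of
`φ(t,ω)U` is the supremum of `edist (φ(t,ω)x) (φ(t,ω)y)` over a countable dense subset of `U`,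
hence measurable in `ω`. A pair `(ω,x)` is stable iff some basic open neighbourhood of `x`
contracts, which exhibits `O` as a countable union of measurable rectangles. Backward invariance
comes from the cocycle identity `φ(s+t,ω) = φ(s,θ^t ω) ∘ φ(t,ω)`: the preimage under `φ(t,ω)` of a
set contracting under `θ^t ω` contracts under `ω`. -/

open Metric Set TopologicalSpace

theorem Metric.ediam_image_eq_of_subset_closure {X Y : Type*} [TopologicalSpace X]
    [PseudoEMetricSpace Y] {f : X → Y} (hf : Continuous f) {s U : Set X} (hsU : s ⊆ U)
    (hUs : U ⊆ closure s) : ediam (f '' U) = ediam (f '' s) := by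
  refine le_antisymm ?_ (ediam_mono (image_mono hsU))
  calc ediam (f '' U) ≤ ediam (closure (f '' s)) :=
        ediam_mono ((image_mono hUs).trans (image_closure_subset_closure_image hf))
    _ = ediam (f '' s) := ediam_closure _

theorem measurable_ediam_image {Ω X Y : Type*} {_ : MeasurableSpace Ω} [TopologicalSpace X]
    [SeparableSpace X] [PseudoEMetricSpace Y] [MeasurableSpace Y] [OpensMeasurableSpace Y]
    [SecondCountableTopology Y] {f : Ω → X → Y} (hcont : ∀ ω, Continuous (f ω))
    (hmeas : ∀ x, Measurable fun ω => f ω x) {U : Set X} (hU : IsOpen U) :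
    Measurable fun ω => ediam (f ω '' U) := by
  obtain ⟨D, hDc, hDd⟩ := exists_countable_dense X
  have hUD : U ⊆ closure (U ∩ D) := hDd.open_subset_closure_inter hU
  have hcount : (U ∩ D).Countable := hDc.mono inter_subset_right
  simp_rw [ediam_image_eq_of_subset_closure (hcont _) inter_subset_left hUD, ediam,
    iSup_image]
  exact Measurable.biSup _ hcount fun x _ => Measurable.biSup _ hcount fun y _ =>
    (hmeas x).edist (hmeas y)

namespace MRDS

variable {Ω X : Type*} [MeasurableSpace Ω] [MetricSpace X] [mX : MeasurableSpace X]
  [BorelSpace X] (R : MRDS Ω X)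

def skew (t : ℕ) (p : Ω × X) : Ω × X := (R.θ t p.1, R.φ t p.1 p.2)

theorem measurable_φ_apply (t : ℕ) (x : X) : Measurable[⨆ t, R.F t] fun ω => R.φ t ω x :=
  ((R.hφmeas t).comp (measurable_id.prodMk measurable_const)).mono (le_iSup R.F t) le_rfl

theorem measurableSet_EU [SecondCountableTopology X] {U : Set X}
    (hU : IsOpen U) : MeasurableSet[⨆ t, R.F t] (R.EU U) :=
  measurableSet_tendsto _ fun t => measurable_ediam_image (R.hφcont t) (R.measurable_φ_apply t) hU

variable {R}

theorem contracts.mono {ω : Ω} {A B : Set X} (hB : R.contracts ω B) (hAB : A ⊆ B) :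
    R.contracts ω A :=
  tendsto_of_tendsto_of_tendsto_of_le_of_le tendsto_const_nhds hB (fun _ => zero_le)
    fun _ => ediam_mono (image_mono hAB)

theorem contracts.preimage_φ {ω : Ω} {t : ℕ} {U : Set X} (hU : R.contracts (R.θ t ω) U) :
    R.contracts ω (R.φ t ω ⁻¹' U) := by
  have hle : ∀ s, ediam (R.φ (s + t) ω '' (R.φ t ω ⁻¹' U)) ≤ ediam (R.φ s (R.θ t ω) '' U) := by
    intro s
    rw [add_comm, R.hφcocycle, image_comp]
    exact ediam_mono (image_mono (image_preimage_subset _ _))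
  exact (tendsto_add_atTop_iff_nat t).1 <|
    tendsto_of_tendsto_of_tendsto_of_le_of_le tendsto_const_nhds hU (fun _ => zero_le) hle

variable (R)

theorem preimage_skew_O_subset (t : ℕ) : R.skew t ⁻¹' R.O ⊆ R.O := by
  rintro ⟨ω, x⟩ ⟨U, hU, hcontr⟩
  exact ⟨R.φ t ω ⁻¹' U, (R.hφcont t ω).continuousAt.preimage_mem_nhds hU, hcontr.preimage_φ⟩

theorem O_eq_biUnion {B : Set (Set X)} (hB : IsTopologicalBasis B) :
    R.O = ⋃ V ∈ B, R.EU V ×ˢ V := by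
  ext ⟨ω, x⟩
  simp only [mem_iUnion, mem_prod, exists_prop]
  constructor
  · rintro ⟨U, hU, hcontr⟩
    obtain ⟨V, hVB, hxV, hVU⟩ := hB.mem_nhds_iff.1 hU
    exact ⟨V, hVB, hcontr.mono hVU, hxV⟩
  · rintro ⟨V, hVB, hcontr, hxV⟩
    exact ⟨V, (hB.isOpen hVB).mem_nhds hxV, hcontr⟩

theorem measurableSet_O [SecondCountableTopology X] :
    MeasurableSet[(⨆ t, R.F t).prod mX] R.O := by
  obtain ⟨B, hBc, -, hB⟩ := exists_countable_basis X
  rw [R.O_eq_biUnion hB]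
  exact .biUnion hBc fun V hV =>
    (R.measurableSet_EU (hB.isOpen hV)).prod (hB.isOpen hV).measurableSet

end MRDS

/-- For any open `U ⊆ X`, the set `E_U` is `F_∞`-measurable; moreover the set `O` of
asymptotically stable pairs is `(F_∞ ⊗ B(X))`-measurable and backward-invariant under the
skew-product `Θ^t(ω,x) = (θ^t ω, φ(t,ω)x)`. -/
theorem stmt6 {Ω X : Type*} [MeasurableSpace Ω] [MetricSpace X] [CompactSpace X]
    [mX : MeasurableSpace X] [BorelSpace X] (R : MRDS Ω X)
    (U : Set X) (hU : IsOpen U) :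
    MeasurableSet[⨆ t, R.F t] (R.EU U) ∧
      MeasurableSet[(⨆ t, R.F t).prod mX] R.O ∧
      ∀ t, (fun p : Ω × X => (R.θ t p.1, R.φ t p.1 p.2)) ⁻¹' R.O ⊆ R.O :=
  ⟨R.measurableSet_EU hU, R.measurableSet_O, R.preimage_skew_O_subset⟩
end

section
/- Let (D,≤) be a countable totally ordered set and suppose events R_{n,s}, S_{n,s} (n ∈ ℕ, s ∈ D) satisfy: (1) S_{n,s} is independent of σ(R_{n,t} : t ≤ s) for all n,s; (2) P(⋃_{s∈D} R_{n,s}) = 1 for all n; (3) inf_{s∈D} P(S_{n,s}) → 1 as n → ∞. Then P(⋃_n ⋃_{s∈D} (R_{n,s} ∩ S_{n,s})) = 1. -/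
open MeasureTheory ProbabilityTheory Filter Topology

/-!
Fix `n`. Split `⋃ s, R s` into the first-entrance pieces `R s \ ⋃ t < s, R t`. Each piece lies
in `σ(R t : t ≤ s)`, hence is independent of `S s`, and summing over the pieces gives
`P (⋃ s, R s ∩ S s) ≥ (⨅ s, P (S s)) * P (⋃ s, R s)`. As `D` need not be well ordered, this
is done on finite subsets of `D` and passed to the limit by continuity from below. The union
over all `n` then has probability at least `⨅ s, P (S n s)` for every `n`.
-/
section

open Function

variable {Ω ι : Type*} {mΩ : MeasurableSpace Ω} {μ : Measure Ω} {c : ENNReal}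

lemma measurableSet_generateFrom_disjointed [LinearOrder ι] [LocallyFiniteOrderBot ι]
    (R : ι → Set Ω) (i : ι) :
    MeasurableSet[MeasurableSpace.generateFrom {A | ∃ j ≤ i, A = R j}] (disjointed R i) := by
  rw [disjointed_apply, Finset.sup_set_eq_biUnion]
  refine .diff (.basic _ ⟨i, le_rfl, rfl⟩) (Finset.measurableSet_biUnion _ fun j hj => ?_)
  exact .basic _ ⟨j, (Finset.mem_Iio.1 hj).le, rfl⟩

lemma mul_measure_iUnion_le_of_indep_of_locallyFiniteOrderBot
    [LinearOrder ι] [LocallyFiniteOrderBot ι] [Countable ι]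
    {R S : ι → Set Ω} (hR : ∀ i, MeasurableSet (R i)) (hS : ∀ i, MeasurableSet (S i))
    (hindep : ∀ i, Indep (MeasurableSpace.generateFrom {S i})
      (MeasurableSpace.generateFrom {A | ∃ j ≤ i, A = R j}) μ)
    (hc : ∀ i, c ≤ μ (S i)) :
    c * μ (⋃ i, R i) ≤ μ (⋃ i, R i ∩ S i) := by
  have hdR : ∀ i, MeasurableSet (disjointed R i) := fun i =>
    MeasurableSpace.generateFrom_le (by rintro _ ⟨j, -, rfl⟩; exact hR j) _
      (measurableSet_generateFrom_disjointed R i)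
  have hdisj : Pairwise (Disjoint on fun i => disjointed R i ∩ S i) := fun i j hij =>
    (disjoint_disjointed R hij).mono Set.inter_subset_left Set.inter_subset_left
  have hprod : ∀ i, μ (disjointed R i ∩ S i) = μ (S i) * μ (disjointed R i) := fun i => by
    rw [Set.inter_comm]
    exact (Indep_iff _ _ _).1 (hindep i) _ _ (.basic _ rfl)
      (measurableSet_generateFrom_disjointed R i)
  calc c * μ (⋃ i, R i)
      = ∑' i, c * μ (disjointed R i) := by
        rw [← iUnion_disjointed, measure_iUnion (disjoint_disjointed R) hdR,
          ENNReal.tsum_mul_left]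
    _ ≤ ∑' i, μ (disjointed R i ∩ S i) := ENNReal.tsum_le_tsum fun i => by
        rw [hprod]; gcongr; exact hc i
    _ = μ (⋃ i, disjointed R i ∩ S i) :=
        (measure_iUnion hdisj fun i => (hdR i).inter (hS i)).symm
    _ ≤ μ (⋃ i, R i ∩ S i) :=
        measure_mono <| Set.iUnion_mono fun i =>
          Set.inter_subset_inter_left _ (disjointed_subset R i)

lemma mul_measure_iUnion_le_of_indep [LinearOrder ι] [Countable ι]
    {R S : ι → Set Ω} (hR : ∀ i, MeasurableSet (R i)) (hS : ∀ i, MeasurableSet (S i))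
    (hindep : ∀ i, Indep (MeasurableSpace.generateFrom {S i})
      (MeasurableSpace.generateFrom {A | ∃ j ≤ i, A = R j}) μ)
    (hc : ∀ i, c ≤ μ (S i)) :
    c * μ (⋃ i, R i) ≤ μ (⋃ i, R i ∩ S i) := by
  have hfinset (F : Finset ι) : c * μ (⋃ i ∈ F, R i) ≤ μ (⋃ i, R i ∩ S i) := by
    set e := F.orderEmbOfFin rfl
    have hle (k : Fin F.card) : MeasurableSpace.generateFrom {A | ∃ l ≤ k, A = R (e l)} ≤
        MeasurableSpace.generateFrom {A | ∃ j ≤ e k, A = R j} :=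
      MeasurableSpace.generateFrom_mono <| by
        rintro _ ⟨l, hl, rfl⟩
        exact ⟨e l, e.monotone hl, rfl⟩
    calc c * μ (⋃ i ∈ F, R i)
        = c * μ (⋃ k, R (e k)) := by
          rw [← Finset.set_biUnion_coe, ← F.range_orderEmbOfFin rfl, Set.biUnion_range]
      _ ≤ μ (⋃ k, R (e k) ∩ S (e k)) :=
          mul_measure_iUnion_le_of_indep_of_locallyFiniteOrderBot (fun k => hR _) (fun k => hS _)
            (fun k => indep_of_indep_of_le_right (hindep (e k)) (hle k)) (fun k => hc _)
      _ ≤ μ (⋃ i, R i ∩ S i) :=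
          measure_mono (Set.iUnion_subset fun k => Set.subset_iUnion (fun i => R i ∩ S i) (e k))
  have hmono : Monotone fun F : Finset ι => ⋃ i ∈ F, R i := fun F G h =>
    Set.biUnion_subset_biUnion_left h
  rw [Set.iUnion_eq_iUnion_finset, hmono.measure_iUnion, ENNReal.mul_iSup]
  exact iSup_le hfinset

end

/-- Lemma 2.2.15: given events `R_{n,s}`, `S_{n,s}` (`n ∈ ℕ`, `s` in a countable totally
ordered set `D`) such that `S_{n,s}` is independent of `σ(R_{n,t} : t ≤ s)`,
`P(⋃_s R_{n,s}) = 1` for all `n`, and `inf_s P(S_{n,s}) → 1` as `n → ∞`, we have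
`P(⋃_n ⋃_s (R_{n,s} ∩ S_{n,s})) = 1`. -/
theorem stmt10 {Ω : Type*} [MeasurableSpace Ω] (P : Measure Ω) [IsProbabilityMeasure P]
    {D : Type*} [Countable D] [LinearOrder D]
    (R S : ℕ → D → Set Ω)
    (hRmeas : ∀ n s, MeasurableSet (R n s)) (hSmeas : ∀ n s, MeasurableSet (S n s))
    (hindep : ∀ n s, Indep
      (MeasurableSpace.generateFrom {S n s})
      (MeasurableSpace.generateFrom {A | ∃ t ≤ s, A = R n t}) P)
    (hfull : ∀ n, P (⋃ s : D, R n s) = 1)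
    (hinf : Tendsto (fun n => ⨅ s : D, P (S n s)) atTop (𝓝 1)) :
    P (⋃ n : ℕ, ⋃ s : D, R n s ∩ S n s) = 1 := by
  refine le_antisymm prob_le_one (le_of_tendsto' hinf fun n => ?_)
  calc ⨅ s, P (S n s) = (⨅ s, P (S n s)) * P (⋃ s, R n s) := by rw [hfull, mul_one]
    _ ≤ P (⋃ s, R n s ∩ S n s) :=
        mul_measure_iUnion_le_of_indep (hRmeas n) (hSmeas n) (hindep n) (iInf_le _)
    _ ≤ P (⋃ n, ⋃ s, R n s ∩ S n s) :=
        measure_mono (Set.subset_iUnion (fun n => ⋃ s, R n s ∩ S n s) n)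
end

section
/- For f_α([x]) = [F(x+α) − α] with F a lift of a degree-one smooth circle map f, and the RDS φ^f on the circle given by composing f_{α_n} ∘ … ∘ f_{α_1} for i.i.d. uniform α_i ∈ [0,1): the circle is minimal under φ^f if and only if f is not a rational rotation. -/
open MeasureTheory Filter Topology

/-- The random trajectory: `compIter F n a x` is the lift of
`f_{a (n-1)} ∘ ⋯ ∘ f_{a 0}` applied to `x`, where `f_α([x]) = [F(x+α) - α]`. -/
noncomputable def compIter (F : ℝ → ℝ) : ℕ → (ℕ → ℝ) → ℝ → ℝ
  | 0, _, x => x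
  | n + 1, a, x => F (compIter F n a x + a n) - a n

/-- The law of `n` i.i.d. uniform random variables on `[0,1)`. -/
noncomputable def unifIid (n : ℕ) : Measure (Fin n → ℝ) :=
  Measure.pi fun _ : Fin n => volume.restrict (Set.Ico (0 : ℝ) 1)

/-- Extend `a : Fin n → ℝ` to `ℕ → ℝ` by zero. -/
noncomputable def extSeq {n : ℕ} (a : Fin n → ℝ) : ℕ → ℝ :=
  fun i => if h : i < n then a ⟨i, h⟩ else 0

section Aux

variable {F : ℝ → ℝ}

lemma compIter_congr {n : ℕ} {a b : ℕ → ℝ} (h : ∀ i < n, a i = b i) (x : ℝ) :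
    compIter F n a x = compIter F n b x := by
  induction n with
  | zero => rfl
  | succ n ih =>
    show F (compIter F n a x + a n) - a n = F (compIter F n b x + b n) - b n
    rw [ih fun i hi => h i (hi.trans (Nat.lt_succ_self n)), h n (Nat.lt_succ_self n)]

lemma compIter_rot {c : ℝ} (hq : ∀ x, F x = x + c) (n : ℕ) (a : ℕ → ℝ) (x : ℝ) :
    compIter F n a x = x + n * c := by
  induction n with
  | zero => simp [compIter]
  | succ n ih =>
    show F (compIter F n a x + a n) - a n = _
    rw [ih, hq]
    push_cast
    ring

lemma compIter_continuous (hF : Continuous F) (n : ℕ) (x : ℝ) :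
    Continuous fun a : ℕ → ℝ => compIter F n a x := by
  induction n with
  | zero => exact continuous_const
  | succ n ih =>
    exact (hF.comp (ih.add (continuous_apply n))).sub (continuous_apply n)

lemma extSeq_continuous {n : ℕ} : Continuous (extSeq : (Fin n → ℝ) → ℕ → ℝ) := by
  refine continuous_pi fun i => ?_
  by_cases h : i < n
  · simp only [extSeq, dif_pos h]
    exact continuous_apply _
  · simp only [extSeq, dif_neg h]
    exact continuous_const

lemma extSeq_snoc_lt {n : ℕ} (a : Fin n → ℝ) (α : ℝ) {i : ℕ} (hi : i < n) :
    extSeq (Fin.snoc a α) i = a ⟨i, hi⟩ := by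
  have h' : i < n + 1 := hi.trans (Nat.lt_succ_self n)
  have : (⟨i, h'⟩ : Fin (n + 1)) = Fin.castSucc ⟨i, hi⟩ := rfl
  simp only [extSeq, dif_pos h', this, Fin.snoc_castSucc]

lemma extSeq_snoc_self {n : ℕ} (a : Fin n → ℝ) (α : ℝ) :
    extSeq (Fin.snoc a α) n = α := by
  have h' : n < n + 1 := Nat.lt_succ_self n
  have : (⟨n, h'⟩ : Fin (n + 1)) = Fin.last n := rfl
  simp only [extSeq, dif_pos h', this, Fin.snoc_last]

/-- The range structure of `g x = F x - x`: it is a compact interval `[m, M]`, and for every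
base point `x` and every `u ∈ [m, M]` there is `α ∈ (0, 1]` realizing `F (x + α) - α = x + u`. -/
lemma exists_arc (hF : Continuous F) (hdeg : ∀ x : ℝ, F (x + 1) = F x + 1) :
    ∃ m M : ℝ, m ≤ M ∧ (∀ x : ℝ, F x - x ∈ Set.Icc m M) ∧
      (∀ x u : ℝ, u ∈ Set.Icc m M → ∃ α ∈ Set.Ioc (0:ℝ) 1, F (x + α) - α = x + u) := by
  set g : ℝ → ℝ := fun x => F x - x with hgdef
  have hper : Function.Periodic g 1 := by
    intro x
    simp only [hgdef, hdeg x]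
    ring
  have hg : Continuous g := hF.sub continuous_id
  have h1 : g '' Set.Icc 0 1 = Set.range g := by
    simpa using hper.image_Icc one_pos 0
  set m := sInf (g '' Set.Icc 0 1) with hm
  set M := sSup (g '' Set.Icc 0 1) with hM
  have h2 : Set.range g = Set.Icc m M := by
    rw [← h1]
    exact ContinuousOn.image_Icc zero_le_one hg.continuousOn
  have hmem : ∀ x, g x ∈ Set.Icc m M := fun x => h2 ▸ Set.mem_range_self x
  have hmM : m ≤ M := le_trans (hmem 0).1 (hmem 0).2
  refine ⟨m, M, hmM, hmem, fun x u hu => ?_⟩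
  have h3 : g '' Set.Ioc x (x + 1) = Set.Icc m M := by
    rw [hper.image_Ioc one_pos x, h2]
  rw [← h3] at hu
  obtain ⟨y, hy, hgy⟩ := hu
  refine ⟨y - x, ⟨by linarith [hy.1], by linarith [hy.2]⟩, ?_⟩
  have hxy : x + (y - x) = y := by ring
  rw [hxy]
  have : F y - y = u := hgy
  linarith

/-- Exact surjectivity of the `n`-step lift onto `x + [n m, n M]`, with noise in `(0,1]`. -/
lemma exists_word {m M : ℝ} (hmM : m ≤ M)
    (hstep : ∀ x u : ℝ, u ∈ Set.Icc m M → ∃ α ∈ Set.Ioc (0:ℝ) 1, F (x + α) - α = x + u) :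
    ∀ (n : ℕ) (x t : ℝ), (n : ℝ) * m ≤ t → t ≤ (n : ℝ) * M →
      ∃ a : Fin n → ℝ, (∀ i, a i ∈ Set.Ioc (0:ℝ) 1) ∧
        compIter F n (extSeq a) x = x + t := by
  intro n
  induction n with
  | zero =>
    intro x t h1 h2
    refine ⟨Fin.elim0, fun i => i.elim0, ?_⟩
    have ht : t = 0 := le_antisymm (by simpa using h2) (by simpa using h1)
    simp [compIter, ht]
  | succ n ih =>
    intro x t h1 h2
    push_cast at h1 h2
    have hnm : (n : ℝ) * m ≤ (n : ℝ) * M :=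
      mul_le_mul_of_nonneg_left hmM (Nat.cast_nonneg n)
    set s := max ((n : ℝ) * m) (t - M) with hs
    have hs1 : (n : ℝ) * m ≤ s := le_max_left _ _
    have hs2 : s ≤ (n : ℝ) * M := max_le hnm (by linarith)
    have hsu : t - M ≤ s := le_max_right _ _
    have hu1 : m ≤ t - s := by
      rcases max_cases ((n : ℝ) * m) (t - M) with ⟨h, _⟩ | ⟨h, _⟩ <;> rw [hs, h] <;> linarith
    have hu2 : t - s ≤ M := by linarith
    obtain ⟨a, ha, hae⟩ := ih x s hs1 hs2
    obtain ⟨α, hα, hαe⟩ := hstep (x + s) (t - s) ⟨hu1, hu2⟩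
    refine ⟨Fin.snoc a α, ?_, ?_⟩
    · intro i
      refine Fin.lastCases ?_ (fun j => ?_) i
      · rw [Fin.snoc_last]; exact hα
      · rw [Fin.snoc_castSucc]; exact ha j
    · show F (compIter F n (extSeq (Fin.snoc a α)) x + extSeq (Fin.snoc a α) n)
          - extSeq (Fin.snoc a α) n = x + t
      have hc : compIter F n (extSeq (Fin.snoc a α)) x = compIter F n (extSeq a) x :=
        compIter_congr (fun i hi => by rw [extSeq_snoc_lt a α hi, extSeq, dif_pos hi]) x
      rw [extSeq_snoc_self, hc, hae]
      rw [hαe]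
      ring

/-- Positivity of `unifIid` on open sets containing a point with coordinates in `(0,1]`. -/
lemma unifIid_pos_of_mem_open {n : ℕ} {S : Set (Fin n → ℝ)} (hS : IsOpen S)
    {a : Fin n → ℝ} (ha : a ∈ S) (h01 : ∀ i, a i ∈ Set.Ioc (0:ℝ) 1) :
    0 < unifIid n S := by
  have hcl : a ∈ closure (Set.pi Set.univ fun _ : Fin n => Set.Ioo (0:ℝ) 1) := by
    rw [closure_pi_set]
    intro i _
    rw [closure_Ioo one_ne_zero.symm]
    exact Set.Ioc_subset_Icc_self (h01 i)
  obtain ⟨b, hbS, hb⟩ := (mem_closure_iff.1 hcl) S hS ha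
  have hTo : IsOpen (S ∩ Set.pi Set.univ fun _ : Fin n => Set.Ioo (0:ℝ) 1) :=
    hS.inter (isOpen_set_pi Set.finite_univ fun _ _ => isOpen_Ioo)
  obtain ⟨ε, hε, hball⟩ := Metric.isOpen_iff.1 hTo b ⟨hbS, hb⟩
  have hbpi : Metric.ball b ε = Set.pi Set.univ fun i => Metric.ball (b i) ε := ball_pi _ hε
  have hsub : Metric.ball b ε ⊆ S := fun y hy => (hball hy).1
  have hkey : 0 < unifIid n (Metric.ball b ε) := by
    rw [hbpi, unifIid, Measure.pi_pi]
    rw [CanonicallyOrderedAdd.prod_pos]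
    intro i _
    have hbi : b i ∈ Set.Ioo (0:ℝ) 1 := hb i (Set.mem_univ i)
    rw [Measure.restrict_apply measurableSet_ball]
    have hlu : max (b i - ε) 0 < min (b i + ε) 1 := by
      rcases hbi with ⟨hb0, hb1⟩
      apply max_lt <;> apply lt_min <;> linarith
    refine lt_of_lt_of_le ?_ (measure_mono (s := Set.Ioo (max (b i - ε) 0) (min (b i + ε) 1)) ?_)
    · rw [Real.volume_Ioo]
      exact ENNReal.ofReal_pos.2 (by linarith)
    · intro y hy
      constructor
      · rw [Real.ball_eq_Ioo]
        exact ⟨lt_of_le_of_lt (le_max_left _ _) hy.1, lt_of_lt_of_le hy.2 (min_le_left _ _)⟩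
      · exact ⟨le_of_lt (lt_of_le_of_lt (le_max_right _ _) hy.1),
          lt_of_lt_of_le hy.2 (min_le_right _ _)⟩
  exact lt_of_lt_of_le hkey (measure_mono hsub)

instance : Infinite (AddCircle (1:ℝ)) := by
  haveI : Fact ((0:ℝ) < 1) := ⟨one_pos⟩
  haveI : Infinite (Set.Ico (0:ℝ) (0 + 1)) :=
    Set.infinite_coe_iff.2 (Set.Ico_infinite (by norm_num))
  exact (Equiv.infinite_iff (AddCircle.equivIco (1:ℝ) 0)).mpr inferInstance

/-- Density of the forward orbit of an irrational rotation. -/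
lemma dense_nsmul_irrational {c : ℝ} (hc : ¬ ∃ q : ℚ, c = (q : ℝ)) :
    DenseRange (fun n : ℕ => n • ((c : ℝ) : AddCircle (1:ℝ))) := by
  haveI : Fact ((0:ℝ) < 1) := ⟨one_pos⟩
  rw [← denseRange_zsmul_iff_nsmul]
  set S : AddSubgroup ℝ := AddSubgroup.zmultiples 1 ⊔ AddSubgroup.zmultiples c with hSdef
  have hd : Dense (S : Set ℝ) := by
    rcases S.dense_or_cyclic with h | ⟨a, ha⟩
    · exact h
    · exfalso
      have h1 : (1:ℝ) ∈ S := AddSubgroup.mem_sup_left (AddSubgroup.mem_zmultiples 1)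
      have hc' : c ∈ S := AddSubgroup.mem_sup_right (AddSubgroup.mem_zmultiples c)
      rw [ha, AddSubgroup.mem_closure_singleton] at h1 hc'
      obtain ⟨k, hk⟩ := h1
      obtain ⟨l, hl⟩ := hc'
      rw [zsmul_eq_mul] at hk hl
      have hk0 : (k : ℝ) ≠ 0 := by
        intro h0
        rw [h0, zero_mul] at hk
        exact one_ne_zero hk.symm
      refine hc ⟨(l : ℚ) / (k : ℚ), ?_⟩
      push_cast
      rw [eq_div_iff hk0]
      calc c * (k : ℝ) = (l : ℝ) * ((k : ℝ) * a) := by rw [← hl]; ring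
        _ = (l : ℝ) := by rw [hk, mul_one]
  have hmk : DenseRange ((↑·) : ℝ → AddCircle (1:ℝ)) :=
    QuotientAddGroup.mk_surjective.denseRange
  have hcont : Continuous ((↑·) : ℝ → AddCircle (1:ℝ)) := continuous_quotient_mk'
  have himg : Dense (((↑·) : ℝ → AddCircle (1:ℝ)) '' (S : Set ℝ)) :=
    hmk.dense_image hcont hd
  have hsub : (((↑·) : ℝ → AddCircle (1:ℝ)) '' (S : Set ℝ)) ⊆
      Set.range fun l : ℤ => l • ((c : ℝ) : AddCircle (1:ℝ)) := by
    rintro _ ⟨x, hx, rfl⟩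
    rw [SetLike.mem_coe, hSdef, AddSubgroup.mem_sup] at hx
    obtain ⟨y, hy, z, hz, rfl⟩ := hx
    obtain ⟨k, rfl⟩ := AddSubgroup.mem_zmultiples_iff.1 hy
    obtain ⟨l, rfl⟩ := AddSubgroup.mem_zmultiples_iff.1 hz
    refine ⟨l, ?_⟩
    show l • ((c : ℝ) : AddCircle (1:ℝ)) = ((k • (1:ℝ) + l • c : ℝ) : AddCircle (1:ℝ))
    rw [eq_comm, AddCircle.coe_add, AddCircle.coe_zsmul, AddCircle.coe_zsmul, AddCircle.coe_period,
      smul_zero, zero_add]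
  exact himg.mono hsub

end Aux

/-- The circle is minimal under the RDS `φ^f` of randomly rotated iterations of a
degree-one smooth circle map `f` (with lift `F`) — in the sense that every non-empty open
subset of the circle is accessible from every point — if and only if `f` is not a
rational rotation. -/
theorem stmt15 (F : ℝ → ℝ) (hF : ContDiff ℝ (⊤ : ℕ∞) F)
    (hdeg : ∀ x : ℝ, F (x + 1) = F x + 1) :
    (∀ (x₀ : ℝ) (U : Set (AddCircle (1 : ℝ))), IsOpen U → U.Nonempty →
      ∃ n : ℕ, 0 < unifIid n
        {a | (↑(compIter F n (extSeq a) x₀) : AddCircle (1 : ℝ)) ∈ U}) ↔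
    ¬ ∃ q : ℚ, ∀ x : ℝ, F x = x + (q : ℝ) := by
  haveI : Fact ((0:ℝ) < 1) := ⟨one_pos⟩
  constructor
  · rintro hmin ⟨q, hq⟩
    -- `[q]` has finite order in the circle, so the orbit is finite
    have hfin : IsOfFinAddOrder (((q : ℝ)) : AddCircle (1:ℝ)) := by
      rw [isOfFinAddOrder_iff_nsmul_eq_zero]
      refine ⟨q.den, q.pos, ?_⟩
      rw [← AddCircle.coe_nsmul]
      have hden : (q.den : ℕ) • ((q : ℝ)) = ((q.num : ℤ) : ℝ) := by
        rw [nsmul_eq_mul]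
        rw [mul_comm]
        exact_mod_cast congrArg (Rat.cast (K := ℝ)) (Rat.mul_den_eq_num q)
      rw [hden]
      rw [AddCircle.coe_eq_zero_iff]
      exact ⟨q.num, by rw [zsmul_eq_mul, mul_one]⟩
    have hCfin : ((AddSubgroup.zmultiples (((q : ℝ)) : AddCircle (1:ℝ)) : AddSubgroup _) :
        Set (AddCircle (1:ℝ))).Finite := hfin.finite_zmultiples
    set C : Set (AddCircle (1:ℝ)) :=
      (AddSubgroup.zmultiples (((q : ℝ)) : AddCircle (1:ℝ)) : Set (AddCircle (1:ℝ))) with hC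
    obtain ⟨n, hn⟩ := hmin 0 Cᶜ hCfin.isClosed.isOpen_compl hCfin.infinite_compl.nonempty
    have hempty : {a : Fin n → ℝ |
        (↑(compIter F n (extSeq a) 0) : AddCircle (1:ℝ)) ∈ Cᶜ} = ∅ := by
      ext a
      simp only [Set.mem_setOf_eq, Set.mem_compl_iff, Set.mem_empty_iff_false, iff_false,
        not_not]
      rw [compIter_rot hq n (extSeq a) 0, zero_add]
      have : ((n : ℝ) * (q : ℝ)) = (n : ℕ) • ((q : ℝ)) := by rw [nsmul_eq_mul]
      rw [this, AddCircle.coe_nsmul]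
      exact ⟨(n : ℤ), natCast_zsmul _ n⟩
    rw [hempty] at hn
    simp at hn
  · intro hirr x₀ U hU hUne
    obtain ⟨m, M, hmM, hrange, hstep⟩ := exists_arc hF.continuous hdeg
    rcases eq_or_lt_of_le hmM with heq | hlt
    · -- `F x = x + m` with `m` irrational: deterministic irrational rotation
      have hconst : ∀ x, F x = x + m := by
        intro x
        have h := hrange x
        rw [← heq] at h
        have h1 := h.1
        have h2 := h.2
        have : F x - x = m := le_antisymm h2 h1
        linarith
      have hmirr : ¬ ∃ q : ℚ, m = (q : ℝ) := by
        rintro ⟨q, hq⟩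
        exact hirr ⟨q, fun x => by rw [hconst x, hq]⟩
      have hdense := dense_nsmul_irrational hmirr
      have hV : IsOpen ((fun z => ((x₀ : ℝ) : AddCircle (1:ℝ)) + z) ⁻¹' U) :=
        hU.preimage (continuous_const.add continuous_id)
      have hVne : ((fun z => ((x₀ : ℝ) : AddCircle (1:ℝ)) + z) ⁻¹' U).Nonempty := by
        obtain ⟨u, hu⟩ := hUne
        exact ⟨u - ((x₀ : ℝ) : AddCircle (1:ℝ)), by simpa using hu⟩
      obtain ⟨n, hn⟩ := hdense.exists_mem_open hV hVne
      refine ⟨n, ?_⟩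
      have hset : {a : Fin n → ℝ |
          (↑(compIter F n (extSeq a) x₀) : AddCircle (1:ℝ)) ∈ U} = Set.univ := by
        ext a
        simp only [Set.mem_setOf_eq, Set.mem_univ, iff_true]
        rw [compIter_rot hconst n (extSeq a) x₀]
        have : ((n : ℝ) * m) = (n : ℕ) • m := by rw [nsmul_eq_mul]
        rw [this, AddCircle.coe_add, AddCircle.coe_nsmul]
        exact hn
      rw [hset]
      rw [unifIid, Measure.pi_univ]
      have hone : (volume.restrict (Set.Ico (0:ℝ) 1)) Set.univ = 1 := by
        rw [Measure.restrict_apply MeasurableSet.univ, Set.univ_inter, Real.volume_Ico]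
        norm_num
      simp [hone]
    · -- nonconstant case: intervals of reachable points grow linearly
      obtain ⟨u, hu⟩ := hUne
      obtain ⟨y, rfl⟩ := QuotientAddGroup.mk_surjective u
      set n : ℕ := ⌈(M - m)⁻¹⌉₊ with hn
      have hlen : 1 ≤ (n : ℝ) * (M - m) := by
        have h1 : (M - m)⁻¹ ≤ (n : ℝ) := Nat.le_ceil _
        have h2 : (0:ℝ) < M - m := by linarith
        calc (1:ℝ) = (M - m)⁻¹ * (M - m) := by field_simp
          _ ≤ (n : ℝ) * (M - m) := by
            exact mul_le_mul_of_nonneg_right h1 (le_of_lt h2)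
      set t : ℝ := (n : ℝ) * m + Int.fract (y - x₀ - (n : ℝ) * m) with ht
      have ht1 : (n : ℝ) * m ≤ t := by
        have := Int.fract_nonneg (y - x₀ - (n : ℝ) * m)
        linarith
      have ht2 : t ≤ (n : ℝ) * M := by
        have := Int.fract_lt_one (y - x₀ - (n : ℝ) * m)
        have hexp : (n : ℝ) * M = (n : ℝ) * m + (n : ℝ) * (M - m) := by ring
        rw [hexp]
        linarith
      obtain ⟨a, ha, hae⟩ := exists_word hmM hstep n x₀ t ht1 ht2
      have hcoe : ((x₀ + t : ℝ) : AddCircle (1:ℝ)) = ((y : ℝ) : AddCircle (1:ℝ)) := by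
        rw [QuotientAddGroup.eq_iff_sub_mem]
        refine ⟨-⌊y - x₀ - (n : ℝ) * m⌋, ?_⟩
        show (-⌊y - x₀ - (n : ℝ) * m⌋ : ℤ) • (1:ℝ) = x₀ + t - y
        rw [zsmul_eq_mul, mul_one, ht, Int.fract]
        push_cast
        ring
      set Sset : Set (Fin n → ℝ) := {a : Fin n → ℝ |
        (↑(compIter F n (extSeq a) x₀) : AddCircle (1:ℝ)) ∈ U} with hSset
      have hScont : Continuous fun a : Fin n → ℝ =>
          (↑(compIter F n (extSeq a) x₀) : AddCircle (1:ℝ)) := by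
        exact Continuous.comp continuous_quotient_mk'
          ((compIter_continuous hF.continuous n x₀).comp extSeq_continuous)
      have hSo : IsOpen Sset := hU.preimage hScont
      have haS : a ∈ Sset := by
        rw [hSset, Set.mem_setOf_eq, hae, hcoe]
        exact hu
      exact ⟨n, unifIid_pos_of_mem_open hSo haS ha⟩
end
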